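/- Let A(x) and B(x) be n-by-n matrices over C[x] of whirl form: A(x) has diagonal entries a_1,...,a_n, entries 1 on the subdiagonal (positions (i+1,i)), entry x in position (1,n), and zeros elsewhere; similarly B(x) with diagonal b_1,...,b_n. If R(a,b) = (b',a') is the affine geometric R-matrix and B'(x), A'(x) are the whirl matrices with diagonals b', a', then A(x)B(x) = B'(x)A'(x) as matrices over C[x]. -/

import Mathlib

/-- Cyclic shift of a vector (indexed `0,…,n-1`) by `i`. -/
noncomputable def cshift (n : ℕ) (a : ℕ → ℂ) (i : ℕ) : ℕ → ℂ := fun j => a ((j + i) % n)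

/-- The energy `E(a,b) = ∑_{i=0}^{n-1} (∏_{j=1}^{i} b_j)(∏_{j=i+2}^{n} a_j)`. -/
noncomputable def energy (n : ℕ) (a b : ℕ → ℂ) : ℂ :=
  ∑ i ∈ Finset.range n, (∏ j ∈ Finset.range i, b j) * ∏ j ∈ Finset.Ico (i + 1) n, a j

/-- The second output `a'` of the affine geometric R-matrix `R : (a,b) ↦ (b',a')`. -/
noncomputable def Ra (n : ℕ) (a b : ℕ → ℂ) : ℕ → ℂ := fun j =>
  a j * energy n (cshift n a j) (cshift n b j) /
    energy n (cshift n a (j + 1)) (cshift n b (j + 1))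

/-- The first output `b'` of the affine geometric R-matrix `R : (a,b) ↦ (b',a')`. -/
noncomputable def Rb (n : ℕ) (a b : ℕ → ℂ) : ℕ → ℂ := fun j =>
  b j * energy n (cshift n a (j + 1)) (cshift n b (j + 1)) /
    energy n (cshift n a j) (cshift n b j)

/-- The whirl matrix over `ℂ[x]` with diagonal entries `c_1,…,c_n`, subdiagonal
entries `1`, and entry `x` in position `(1,n)`. -/
noncomputable def whirl (n : ℕ) (c : ℕ → ℂ) : Matrix (Fin n) (Fin n) (Polynomial ℂ) :=
  Matrix.of fun i j =>
    if (i : ℕ) = (j : ℕ) then Polynomial.C (c i)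
    else if (i : ℕ) = (j : ℕ) + 1 then 1
    else if (i : ℕ) = 0 ∧ (j : ℕ) = n - 1 then Polynomial.X
    else 0

/-!
Write a whirl matrix as `D_c + S`, where `D_c` is diagonal and `S` is the cyclic shift carrying
`x` in its corner. Then `A B = B' A'` reduces to `a_i b_i = b'_i a'_i` together with
`a_{i+1} + b_i = b'_{i+1} + a'_i` (indices mod `n`). The first is immediate from the definition
of `R`. Writing `E_k` for the energy of the data shifted by `k`, the second is, after clearing
denominators, the statement that `b_k E_{k+1} - a_k E_k` does not depend on `k`; it is in fact
always `∏ b - ∏ a`.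
-/

open Finset Matrix Polynomial

lemma cshift_apply_of_lt {n i j : ℕ} (a : ℕ → ℂ) (h : j + i < n) :
    cshift n a i j = a (j + i) := by
  rw [cshift, Nat.mod_eq_of_lt h]

lemma cshift_cshift (n : ℕ) (a : ℕ → ℂ) (i k : ℕ) :
    cshift n (cshift n a i) k = cshift n a (k + i) := by
  funext j
  simp only [cshift, Nat.mod_add_mod, Nat.add_assoc]

lemma cshift_mod (n : ℕ) (a : ℕ → ℂ) (i : ℕ) : cshift n a (i % n) = cshift n a i := by
  funext j
  simp only [cshift, Nat.add_mod_mod]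

lemma cshift_mod_add (n : ℕ) (a : ℕ → ℂ) (i k : ℕ) :
    cshift n a (i % n + k) = cshift n a (i + k) := by
  funext j
  simp only [cshift, Nat.add_mod, Nat.mod_mod]

lemma prod_range_cshift_one (m : ℕ) (a : ℕ → ℂ) :
    ∏ j ∈ range (m + 1), cshift (m + 1) a 1 j = ∏ j ∈ range (m + 1), a j := by
  rw [prod_range_succ, prod_range_succ']
  simp only [cshift, Nat.mod_self]
  congr 1
  exact prod_congr rfl fun j hj => by rw [Nat.mod_eq_of_lt (by have := mem_range.1 hj; omega)]

lemma prod_range_cshift (n : ℕ) (a : ℕ → ℂ) (k : ℕ) :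
    ∏ j ∈ range n, cshift n a k j = ∏ j ∈ range n, a j := by
  cases n with
  | zero => simp
  | succ m =>
    induction k with
    | zero => exact prod_congr rfl fun j hj => cshift_apply_of_lt a (by simpa using hj)
    | succ k ih => rw [add_comm k 1, ← cshift_cshift, prod_range_cshift_one, ih]

lemma mul_energy_cshift_one_sub (m : ℕ) (a b : ℕ → ℂ) :
    b 0 * energy (m + 1) (cshift (m + 1) a 1) (cshift (m + 1) b 1) - a 0 * energy (m + 1) a b
      = ∏ j ∈ range (m + 1), b j - ∏ j ∈ range (m + 1), a j := by
  -- `b 0` times the `i`-th term of the shifted energy is `a 0` times the `(i+1)`-st term of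
  -- `energy (m + 1) a b`, and the last shifted term contributes `∏ b`.
  set T : ℕ → ℂ := fun i =>
    (∏ j ∈ range (i + 1), b j) * ∏ j ∈ Ico (i + 2) (m + 1), a j
  have hb (i : ℕ) (hi : i ≤ m) :
      b 0 * ∏ j ∈ range i, cshift (m + 1) b 1 j = ∏ j ∈ range (i + 1), b j := by
    rw [prod_range_succ', mul_comm]
    congr 1
    exact prod_congr rfl fun j hj => cshift_apply_of_lt b (by have := mem_range.1 hj; omega)
  have ha (i : ℕ) (hi : i < m) :
      ∏ j ∈ Ico (i + 1) (m + 1), cshift (m + 1) a 1 j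
        = (∏ j ∈ Ico (i + 2) (m + 1), a j) * a 0 := by
    rw [prod_Ico_succ_top (by omega)]
    congr 1
    · refine .trans (prod_congr rfl fun j hj => ?_) (prod_Ico_add' a (i + 1) m 1)
      exact cshift_apply_of_lt a (by have := mem_Ico.1 hj; omega)
    · simp [cshift]
  have hE : energy (m + 1) a b = ∑ i ∈ range m, T i + ∏ j ∈ Ico 1 (m + 1), a j := by
    simp [energy, sum_range_succ' _ m, T]
  have hE₁ : b 0 * energy (m + 1) (cshift (m + 1) a 1) (cshift (m + 1) b 1)
      = a 0 * ∑ i ∈ range m, T i + ∏ j ∈ range (m + 1), b j := by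
    rw [energy, sum_range_succ, mul_add, mul_sum, mul_sum, Ico_self, prod_empty, mul_one,
      hb m le_rfl]
    congr 1
    refine sum_congr rfl fun i hi => ?_
    rw [← mul_assoc, hb i (by have := mem_range.1 hi; omega), ha i (mem_range.1 hi)]
    ring
  rw [hE₁, hE, prod_range_eq_mul_Ico a m.succ_pos]
  ring

lemma mul_energy_cshift_succ_sub (n : ℕ) (a b : ℕ → ℂ) (k : ℕ) :
    b (k % n) * energy n (cshift n a (k + 1)) (cshift n b (k + 1))
        - a (k % n) * energy n (cshift n a k) (cshift n b k)
      = ∏ j ∈ range n, b j - ∏ j ∈ range n, a j := by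
  cases n with
  | zero => simp [energy]
  | succ m =>
    have h := mul_energy_cshift_one_sub m (cshift (m + 1) a k) (cshift (m + 1) b k)
    rw [cshift_cshift, cshift_cshift, prod_range_cshift, prod_range_cshift, add_comm 1 k] at h
    simpa only [cshift, zero_add] using h

section RMatrix

variable {n : ℕ} {a b : ℕ → ℂ} (hE : ∀ i, energy n (cshift n a i) (cshift n b i) ≠ 0)
include hE

lemma Rb_mul_Ra (k : ℕ) : Rb n a b k * Ra n a b k = a k * b k := by
  have := hE k
  have := hE (k + 1)
  unfold Rb Ra
  field_simp

lemma Rb_add_Ra {j : ℕ} (hj : j < n) :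
    Rb n a b ((j + 1) % n) + Ra n a b j = a ((j + 1) % n) + b j := by
  have h₀ := mul_energy_cshift_succ_sub n a b j
  have h₁ := mul_energy_cshift_succ_sub n a b (j + 1)
  rw [Nat.mod_eq_of_lt hj] at h₀
  have := hE (j + 1)
  unfold Rb Ra
  rw [cshift_mod_add, cshift_mod_add, cshift_mod, cshift_mod]
  field_simp
  linear_combination h₁ - h₀

end RMatrix

lemma diagonal_add_mul_diagonal_add_eq {ι R : Type*} [Fintype ι] [DecidableEq ι] [CommRing R]
    (S : Matrix ι ι R) {a b a' b' : ι → R} (hdiag : ∀ i, a i * b i = b' i * a' i)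
    (hoff : ∀ i j, S i j ≠ 0 → a i + b j = b' i + a' j) :
    (diagonal a + S) * (diagonal b + S) = (diagonal b' + S) * (diagonal a' + S) := by
  have hlin : diagonal a * S + S * diagonal b = diagonal b' * S + S * diagonal a' := by
    ext i j
    simp only [Matrix.add_apply, diagonal_mul, mul_diagonal]
    by_cases h : S i j = 0
    · simp [h]
    · linear_combination S i j * hoff i j h
  simp only [add_mul, mul_add, diagonal_mul_diagonal, hdiag]
  rw [← sub_eq_zero] at hlin ⊢
  rw [← hlin]
  abel

noncomputable def whirlShift (n : ℕ) : Matrix (Fin n) (Fin n) ℂ[X] :=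
  Matrix.of fun i j =>
    if (i : ℕ) = (j : ℕ) + 1 then 1 else if (i : ℕ) = 0 ∧ (j : ℕ) = n - 1 then X else 0

lemma whirl_eq_diagonal_add_whirlShift {n : ℕ} (hn : 2 ≤ n) (c : ℕ → ℂ) :
    whirl n c = diagonal (fun i : Fin n => C (c i)) + whirlShift n := by
  refine Matrix.ext fun i j => ?_
  simp only [whirl, whirlShift, of_apply, Matrix.add_apply, diagonal_apply, Fin.ext_iff]
  split_ifs <;> first | omega | simp

lemma val_eq_of_whirlShift_ne_zero {n : ℕ} {i j : Fin n} (h : whirlShift n i j ≠ 0) :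
    (i : ℕ) = ((j : ℕ) + 1) % n := by
  have := j.isLt
  simp only [whirlShift, of_apply] at h
  split_ifs at h with h₁ h₂
  · rw [h₁, Nat.mod_eq_of_lt (h₁ ▸ i.isLt)]
  · rw [h₂.1, h₂.2, Nat.sub_add_cancel (by omega), Nat.mod_self]
  · exact absurd rfl h

theorem whirl_R_matrix_general (n : ℕ) (hn : 2 ≤ n) (a b : ℕ → ℂ)
    (hE : ∀ i, energy n (cshift n a i) (cshift n b i) ≠ 0) :
    whirl n a * whirl n b = whirl n (Rb n a b) * whirl n (Ra n a b) := by
  simp only [whirl_eq_diagonal_add_whirlShift hn]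
  refine diagonal_add_mul_diagonal_add_eq _ (fun i => ?_) (fun i j hij => ?_)
  · rw [← C_mul, ← C_mul, Rb_mul_Ra hE]
  · rw [val_eq_of_whirlShift_ne_zero hij, ← C_add, ← C_add, Rb_add_Ra hE j.isLt]

/-- If `R(a,b) = (b',a')` is the affine geometric R-matrix, then the corresponding
whirl matrices satisfy `A(x)B(x) = B'(x)A'(x)`. -/
theorem whirl_R_matrix (n : ℕ) (hn : 2 ≤ n) (a b : ℕ → ℂ)
    (ha : ∀ j, a j ≠ 0) (hb : ∀ j, b j ≠ 0)
    (hE : ∀ i, energy n (cshift n a i) (cshift n b i) ≠ 0) :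
    whirl n a * whirl n b = whirl n (Rb n a b) * whirl n (Ra n a b) :=
  whirl_R_matrix_general n hn a b hE
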